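/- Wold decomposition for a 𝔓-isometry: Let (V₁,V₂,V₃) be a 𝔓-isometry on a complex Hilbert space H. Then there is a unique orthogonal decomposition H = H_u ⊕ H_c into closed subspaces H_u and H_c, each jointly reducing for V₁, V₂ and V₃, such that (V₁|_{H_u}, V₂|_{H_u}, V₃|_{H_u}) is a 𝔓-unitary and (V₁|_{H_c}, V₂|_{H_c}, V₃|_{H_c}) is a pure 𝔓-isometry, i.e. there is no nonzero closed subspace of H_c, jointly reducing for V₁,V₂,V₃, on which the restricted triple is a 𝔓-unitary. -/

import Mathlib

open ContinuousLinearMap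

noncomputable section

variable {H : Type*} [NormedAddCommGroup H] [InnerProductSpace ℂ H] [CompleteSpace H]

/-- A 𝔓-isometry (the paper's algebraic characterization): a commuting triple (V₁,V₂,V₃)
with V₃ an isometry, V₂ = V₂*V₃, ‖V₂‖ ≤ 2 and V₁*V₁ + ¼V₂*V₂ = I. -/
def IsPIsometry (V₁ V₂ V₃ : H →L[ℂ] H) : Prop :=
  Commute V₁ V₂ ∧ Commute V₁ V₃ ∧ Commute V₂ V₃ ∧
    adjoint V₃ * V₃ = 1 ∧ V₂ = adjoint V₂ * V₃ ∧ ‖V₂‖ ≤ 2 ∧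
    adjoint V₁ * V₁ + (1 / 4 : ℂ) • (adjoint V₂ * V₂) = 1

/-- A closed subspace L jointly reduces the triple (V₁,V₂,V₃): it is invariant under each
operator and under each adjoint. -/
def ReducesTriple (L : Submodule ℂ H) (V₁ V₂ V₃ : H →L[ℂ] H) : Prop :=
  (∀ x ∈ L, V₁ x ∈ L) ∧ (∀ x ∈ L, V₂ x ∈ L) ∧ (∀ x ∈ L, V₃ x ∈ L) ∧
    (∀ x ∈ L, adjoint V₁ x ∈ L) ∧ (∀ x ∈ L, adjoint V₂ x ∈ L) ∧ (∀ x ∈ L, adjoint V₃ x ∈ L)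

/-- On a jointly reducing subspace L, the restriction of (V₁,V₂,V₃) is a 𝔓-unitary, expressed
pointwise (the adjoint of a restriction to a reducing subspace is the restriction of the
adjoint): each restriction is normal, V₃ is unitary on L, V₂ = V₂*V₃ on L, ‖V₂x‖ ≤ 2‖x‖ on L
and V₁*V₁ = I − ¼V₂*V₂ on L. -/
def IsPUnitaryOn (L : Submodule ℂ H) (V₁ V₂ V₃ : H →L[ℂ] H) : Prop :=
  (∀ x ∈ L, V₁ (adjoint V₁ x) = adjoint V₁ (V₁ x)) ∧
    (∀ x ∈ L, V₂ (adjoint V₂ x) = adjoint V₂ (V₂ x)) ∧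
    (∀ x ∈ L, V₃ (adjoint V₃ x) = adjoint V₃ (V₃ x)) ∧
    (∀ x ∈ L, adjoint V₃ (V₃ x) = x) ∧ (∀ x ∈ L, V₃ (adjoint V₃ x) = x) ∧
    (∀ x ∈ L, V₂ x = adjoint V₂ (V₃ x)) ∧
    (∀ x ∈ L, ‖V₂ x‖ ≤ 2 * ‖x‖) ∧
    (∀ x ∈ L, adjoint V₁ (V₁ x) + (1 / 4 : ℂ) • adjoint V₂ (V₂ x) = x)

/-!
On a reducing subspace `L`, the 𝔓-isometry relations already give every clause of a 𝔓-unitary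
except `V₃ V₃* = I` and the normality of `V₁`, `V₂`; so the restriction is a 𝔓-unitary exactly
when `L` lies in the closed subspace where these three identities hold. `H_u` is the largest
reducing subspace inside that locus, closed because its closure is again such a subspace.
Maximality makes `H_uᗮ` pure, and any other admissible `H_u'` lies in `H_u`, with `H_u ⊖ H_u'`
reducing, inside the locus and orthogonal to `H_u'`, hence zero.
-/

open Module.End

lemma Module.End.sSup_mem_invtSubmodule {R M : Type*} [Semiring R] [AddCommMonoid M]
    [Module R M] {f : Module.End R M} {S : Set (Submodule R M)}
    (hS : ∀ p ∈ S, p ∈ f.invtSubmodule) : sSup S ∈ f.invtSubmodule :=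
  sSup_le fun p hp => (hS p hp).trans (Submodule.comap_mono (le_sSup hp))

section ReducesTriple

variable {V₁ V₂ V₃ : H →L[ℂ] H}

lemma ReducesTriple.orthogonal {L : Submodule ℂ H} (h : ReducesTriple L V₁ V₂ V₃) :
    ReducesTriple Lᗮ V₁ V₂ V₃ := by
  obtain ⟨h₁, h₂, h₃, h₁', h₂', h₃'⟩ := h
  have adj {T : H →L[ℂ] H} (hT : L ∈ invtSubmodule (T : H →ₗ[ℂ] H)) :
      L ∈ invtSubmodule (adjoint (adjoint T) : H →ₗ[ℂ] H) := by
    rwa [adjoint_adjoint]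
  exact ⟨orthogonal_mem_invtSubmodule h₁', orthogonal_mem_invtSubmodule h₂',
    orthogonal_mem_invtSubmodule h₃', orthogonal_mem_invtSubmodule (adj h₁),
    orthogonal_mem_invtSubmodule (adj h₂), orthogonal_mem_invtSubmodule (adj h₃)⟩

lemma ReducesTriple.inf {L L' : Submodule ℂ H} (h : ReducesTriple L V₁ V₂ V₃)
    (h' : ReducesTriple L' V₁ V₂ V₃) : ReducesTriple (L ⊓ L') V₁ V₂ V₃ :=
  ⟨invtSubmodule.inf_mem h.1 h'.1, invtSubmodule.inf_mem h.2.1 h'.2.1,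
    invtSubmodule.inf_mem h.2.2.1 h'.2.2.1, invtSubmodule.inf_mem h.2.2.2.1 h'.2.2.2.1,
    invtSubmodule.inf_mem h.2.2.2.2.1 h'.2.2.2.2.1,
    invtSubmodule.inf_mem h.2.2.2.2.2 h'.2.2.2.2.2⟩

lemma ReducesTriple.topologicalClosure {L : Submodule ℂ H} (h : ReducesTriple L V₁ V₂ V₃) :
    ReducesTriple L.topologicalClosure V₁ V₂ V₃ := by
  obtain ⟨h₁, h₂, h₃, h₁', h₂', h₃'⟩ := h
  exact ⟨Submodule.topologicalClosure_mem_invtSubmodule h₁,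
    Submodule.topologicalClosure_mem_invtSubmodule h₂,
    Submodule.topologicalClosure_mem_invtSubmodule h₃,
    Submodule.topologicalClosure_mem_invtSubmodule h₁',
    Submodule.topologicalClosure_mem_invtSubmodule h₂',
    Submodule.topologicalClosure_mem_invtSubmodule h₃'⟩

end ReducesTriple

def pUnitaryLocus (V₁ V₂ V₃ : H →L[ℂ] H) : Submodule ℂ H :=
  LinearMap.ker ((V₃ * adjoint V₃ - 1 : H →L[ℂ] H) : H →ₗ[ℂ] H) ⊓
    LinearMap.ker ((V₁ * adjoint V₁ - adjoint V₁ * V₁ : H →L[ℂ] H) : H →ₗ[ℂ] H) ⊓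
    LinearMap.ker ((V₂ * adjoint V₂ - adjoint V₂ * V₂ : H →L[ℂ] H) : H →ₗ[ℂ] H)

section pUnitaryLocus

variable {V₁ V₂ V₃ : H →L[ℂ] H}

lemma mem_pUnitaryLocus {x : H} :
    x ∈ pUnitaryLocus V₁ V₂ V₃ ↔
      V₃ (adjoint V₃ x) = x ∧ V₁ (adjoint V₁ x) = adjoint V₁ (V₁ x) ∧
        V₂ (adjoint V₂ x) = adjoint V₂ (V₂ x) := by
  simp only [pUnitaryLocus, Submodule.mem_inf, LinearMap.mem_ker, coe_coe, sub_apply,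
    sub_eq_zero, and_assoc]
  rfl

lemma isClosed_pUnitaryLocus (V₁ V₂ V₃ : H →L[ℂ] H) :
    IsClosed (pUnitaryLocus V₁ V₂ V₃ : Set H) :=
  ((isClosed_ker _).inter (isClosed_ker _)).inter (isClosed_ker _)

lemma IsPIsometry.isPUnitaryOn_iff (h : IsPIsometry V₁ V₂ V₃) {L : Submodule ℂ H} :
    IsPUnitaryOn L V₁ V₂ V₃ ↔ L ≤ pUnitaryLocus V₁ V₂ V₃ := by
  obtain ⟨-, -, -, hV₃, hV₂, hnorm, hdefect⟩ := h
  constructor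
  · rintro ⟨h₁, h₂, -, -, h₃, -, -, -⟩ x hx
    exact mem_pUnitaryLocus.mpr ⟨h₃ x hx, h₁ x hx, h₂ x hx⟩
  · intro hL
    have hmem x (hx : x ∈ L) := mem_pUnitaryLocus.mp (hL hx)
    have hiso x : adjoint V₃ (V₃ x) = x := DFunLike.congr_fun hV₃ x
    refine ⟨fun x hx => (hmem x hx).2.1, fun x hx => (hmem x hx).2.2,
      fun x hx => by rw [(hmem x hx).1, hiso], fun x _ => hiso x,
      fun x hx => (hmem x hx).1, fun x _ => DFunLike.congr_fun hV₂ x,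
      fun x _ => V₂.le_of_opNorm_le hnorm x, fun x _ => DFunLike.congr_fun hdefect x⟩

end pUnitaryLocus

lemma Submodule.eq_of_le_of_orthogonal_inf_eq_bot {𝕜 E : Type*} [RCLike 𝕜]
    [NormedAddCommGroup E] [InnerProductSpace 𝕜 E] {K K' : Submodule 𝕜 E}
    [K.HasOrthogonalProjection] (h : K ≤ K') (h' : Kᗮ ⊓ K' = ⊥) : K = K' := by
  simpa [h'] using sup_orthogonal_inf_of_hasOrthogonalProjection h

def reducingCore (V₁ V₂ V₃ : H →L[ℂ] H) (M : Submodule ℂ H) : Submodule ℂ H :=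
  sSup {L | ReducesTriple L V₁ V₂ V₃ ∧ L ≤ M}

section reducingCore

variable {V₁ V₂ V₃ : H →L[ℂ] H} {M : Submodule ℂ H}

lemma reducesTriple_reducingCore : ReducesTriple (reducingCore V₁ V₂ V₃ M) V₁ V₂ V₃ :=
  ⟨sSup_mem_invtSubmodule fun _ hL => hL.1.1, sSup_mem_invtSubmodule fun _ hL => hL.1.2.1,
    sSup_mem_invtSubmodule fun _ hL => hL.1.2.2.1,
    sSup_mem_invtSubmodule fun _ hL => hL.1.2.2.2.1,
    sSup_mem_invtSubmodule fun _ hL => hL.1.2.2.2.2.1,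
    sSup_mem_invtSubmodule fun _ hL => hL.1.2.2.2.2.2⟩

lemma reducingCore_le : reducingCore V₁ V₂ V₃ M ≤ M :=
  sSup_le fun _ hL => hL.2

lemma le_reducingCore {L : Submodule ℂ H} (hL : ReducesTriple L V₁ V₂ V₃) (hLM : L ≤ M) :
    L ≤ reducingCore V₁ V₂ V₃ M :=
  le_sSup ⟨hL, hLM⟩

lemma isClosed_reducingCore (hM : IsClosed (M : Set H)) :
    IsClosed (reducingCore V₁ V₂ V₃ M : Set H) := by
  have hclosure : (reducingCore V₁ V₂ V₃ M).topologicalClosure ≤ reducingCore V₁ V₂ V₃ M :=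
    le_reducingCore reducesTriple_reducingCore.topologicalClosure
      (Submodule.topologicalClosure_minimal _ reducingCore_le hM)
  rw [← closure_subset_iff_isClosed, ← Submodule.topologicalClosure_coe]
  exact hclosure

end reducingCore

/-- Wold decomposition for a 𝔓-isometry: there is a unique orthogonal decomposition
H = H_u ⊕ H_uᗮ into jointly reducing closed subspaces such that the restriction to H_u is a
𝔓-unitary and the restriction to H_c = H_uᗮ is a pure 𝔓-isometry (no nonzero closed jointly
reducing subspace of H_c carries a 𝔓-unitary restriction). -/
theorem stmt15 (V₁ V₂ V₃ : H →L[ℂ] H) (h : IsPIsometry V₁ V₂ V₃) :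
    ∃! Hu : Submodule ℂ H, IsClosed (Hu : Set H) ∧
      ReducesTriple Hu V₁ V₂ V₃ ∧ ReducesTriple Huᗮ V₁ V₂ V₃ ∧
      IsPUnitaryOn Hu V₁ V₂ V₃ ∧
      (∀ L : Submodule ℂ H, IsClosed (L : Set H) → L ≤ Huᗮ →
        ReducesTriple L V₁ V₂ V₃ → IsPUnitaryOn L V₁ V₂ V₃ → L = ⊥) := by
  set Hu := reducingCore V₁ V₂ V₃ (pUnitaryLocus V₁ V₂ V₃)
  have hclosed : IsClosed (Hu : Set H) := isClosed_reducingCore (isClosed_pUnitaryLocus V₁ V₂ V₃)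
  have hmax (L : Submodule ℂ H) (hL : ReducesTriple L V₁ V₂ V₃)
      (hLu : IsPUnitaryOn L V₁ V₂ V₃) : L ≤ Hu :=
    le_reducingCore hL (h.isPUnitaryOn_iff.mp hLu)
  refine ⟨Hu, ⟨hclosed, reducesTriple_reducingCore, reducesTriple_reducingCore.orthogonal,
    h.isPUnitaryOn_iff.mpr reducingCore_le, fun L _ hL hLred hLu => ?_⟩, ?_⟩
  · exact ((Submodule.orthogonal_disjoint Hu).mono_left (hmax L hLred hLu)).eq_bot_of_le hL
  · rintro Hu' ⟨hclosed', hred', hcompl', hu', hpure'⟩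
    have : CompleteSpace Hu' := hclosed'.completeSpace_coe
    refine Submodule.eq_of_le_of_orthogonal_inf_eq_bot (hmax Hu' hred' hu') ?_
    exact hpure' _ ((Submodule.isClosed_orthogonal Hu').inter hclosed) inf_le_left
      (hcompl'.inf reducesTriple_reducingCore)
      (h.isPUnitaryOn_iff.mpr (inf_le_right.trans reducingCore_le))
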